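/- In Ãₙ, the natural map from the parabolic subgroup ⟨a₁,…,aₙ⟩ to the quotient Ãₙ/N is an isomorphism onto Ãₙ/N, where N = ⟨pⱼ⁻¹pᵢ⟩; consequently Ãₙ/N ≅ Aₙ (the finite Coxeter group of type A, i.e., the symmetric group S_{n+1}). -/

import Mathlib

/-!
Sending `aᵢ` to the transposition `(i i+1)` of `ℤ/(n+1)` defines (for `n ≥ 2`) a homomorphism
`π : Ãₙ → S_{n+1}` under which every `pⱼ` becomes the rotation `x ↦ x + 1`, so `N ≤ ker π`.
The transpositions `(1 2), …, (n 0)` generate `S_{n+1}`, so `π` maps `⟨a₁,…,aₙ⟩` onto `S_{n+1}`.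
Conversely the type-`A` relations alone bound `|⟨a₁,…,aₙ⟩|` by `(n+1)!`: the subgroup
`⟨s₀,…,s_m⟩` is the union of the `m + 2` cosets `⟨s₀,…,s_{m-1}⟩ · s_m s_{m-1} ⋯ s_ℓ`, since
their union is stable under right multiplication by each `sᵢ` (a braid move when `ℓ < i`).
Hence `π` is injective on `⟨a₁,…,aₙ⟩`, which therefore meets `N` trivially. Finally
`p₁ = a₂ ⋯ aₙ a₀` and `p₁ ≡ p₀ = a₁ ⋯ aₙ` modulo `N`, so `a₀ ∈ ⟨a₁,…,aₙ⟩ N`.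
-/

open CoxeterMatrix

/-- The affine Coxeter matrix of type Ãₙ on the cyclic index set `ZMod (n+1)`:
`aᵢ² = 1`, `(aᵢa_{i+1})³ = 1`, and non-adjacent generators (mod n+1) commute. -/
def affineA (n : ℕ) : CoxeterMatrix (ZMod (n + 1)) where
  M := fun i j => if i = j then 1 else if i = j + 1 ∨ j = i + 1 then 3 else 2
  isSymm := by
    ext i j
    by_cases h : i = j
    · simp [Matrix.transpose, h]
    · simp only [Matrix.transpose, Matrix.of_apply]
      rw [if_neg h, if_neg (Ne.symm h)]
      exact if_congr or_comm rfl rfl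
  diagonal := fun i => by simp
  off_diagonal := fun i j h => by
    simp only [if_neg h]
    split <;> simp

/-- The Coxeter generators `aᵢ` of `Ãₙ`. -/
def aa (n : ℕ) (i : ZMod (n + 1)) : (affineA n).Group := (affineA n).simple i

/-- The cyclic products `pⱼ = a_{j+1} a_{j+2} ⋯ a_{j-1}` (indices mod `n+1`). -/
def pp (n : ℕ) (j : ZMod (n + 1)) : (affineA n).Group :=
  ((List.range n).map fun k => aa n (j + 1 + (k : ℕ))).prod

/-- `gⱼ = pⱼ⁻¹ p_{j+1}`. -/
def gg (n : ℕ) (j : ZMod (n + 1)) : (affineA n).Group := (pp n j)⁻¹ * pp n (j + 1)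

/-- The subgroup `N = ⟨pⱼ⁻¹pᵢ : i, j⟩` of `Ãₙ`. -/
def NN (n : ℕ) : Subgroup (affineA n).Group :=
  Subgroup.closure {x | ∃ i j : ZMod (n + 1), x = (pp n j)⁻¹ * pp n i}

/-- The standard parabolic subgroup `⟨a₁,…,aₙ⟩` of `Ãₙ` (all generators except `a_{n+1} = a₀`). -/
def parab (n : ℕ) : Subgroup (affineA n).Group :=
  Subgroup.closure {x | ∃ i : ZMod (n + 1), i ≠ 0 ∧ x = aa n i}

section TypeARelations

open Subgroup Set Pointwise

variable {G : Type*} [Group G] (s : ℕ → G)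

def descProd : ℕ → ℕ → G
  | _, 0 => 1
  | a, k + 1 => descProd (a + 1) k * s a

theorem descProd_add (a k l : ℕ) :
    descProd s a (k + l) = descProd s (a + k) l * descProd s a k := by
  induction k generalizing a with
  | zero => simp [descProd]
  | succ k ih =>
    rw [Nat.add_right_comm, descProd, ih, descProd, ← mul_assoc, Nat.add_right_comm a, add_assoc]

theorem descProd_two (a : ℕ) : descProd s a 2 = s (a + 1) * s a := by
  simp [descProd]

theorem commute_descProd {x : G} {a k : ℕ} (h : ∀ i, a ≤ i → i < a + k → Commute x (s i)) :
    Commute x (descProd s a k) := by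
  induction k generalizing a with
  | zero => exact Commute.one_right x
  | succ k ih =>
    exact (ih fun i hi hik => h i (by omega) (by omega)).mul_right (h a le_rfl (by omega))

structure IsTypeAFamily (n : ℕ) : Prop where
  mul_self : ∀ i < n, s i * s i = 1
  braid : ∀ i, i + 1 < n → s i * s (i + 1) * s i = s (i + 1) * s i * s (i + 1)
  commute : ∀ i j, i + 2 ≤ j → j < n → Commute (s i) (s j)

namespace IsTypeAFamily

variable {s}

theorem mono {m n : ℕ} (hs : IsTypeAFamily s n) (hmn : m ≤ n) : IsTypeAFamily s m where
  mul_self i hi := hs.mul_self i (by omega)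
  braid i hi := hs.braid i (by omega)
  commute i j hij hj := hs.commute i j hij (by omega)

theorem exists_descProd_mul_eq {m j l k : ℕ} (hs : IsTypeAFamily s (m + 1)) (hj : j ≤ m)
    (hlk : l + k = m + 1) :
    ∃ h ∈ closure (s '' Iio m), ∃ l' k', l' + k' = m + 1 ∧
      descProd s l k * s j = h * descProd s l' k' := by
  have gen : ∀ i < m, s i ∈ closure (s '' Iio m) := fun i hi => subset_closure ⟨i, hi, rfl⟩
  rcases lt_trichotomy (j + 1) l with hjl | rfl | hlj
  · refine ⟨s j, gen j (by omega), l, k, hlk, ?_⟩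
    exact (commute_descProd s fun i hi _ => hs.commute j i (by omega) (by omega)).eq.symm
  · exact ⟨1, one_mem _, j, k + 1, by omega, by rw [one_mul, descProd]⟩
  obtain rfl | hlj := eq_or_lt_of_le (Nat.lt_succ_iff.mp hlj)
  · obtain ⟨k, rfl⟩ : ∃ k', k = k' + 1 := ⟨k - 1, by omega⟩
    refine ⟨1, one_mem _, l + 1, k, by omega, ?_⟩
    rw [one_mul, descProd, mul_assoc, hs.mul_self l (by omega), mul_one]
  -- Writing the word as `C · s_(i+1) s_i · A`, with `A` commuting with `s_(i+1)` and `C` with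
  -- `s_i`, one braid move turns the trailing `s_(i+1)` into a leading `s_i`.
  obtain ⟨i, rfl⟩ : ∃ i, j = i + 1 := ⟨j - 1, by omega⟩
  obtain ⟨u, rfl⟩ : ∃ u, i = l + u := ⟨i - l, by omega⟩
  obtain ⟨v, rfl⟩ : ∃ v, k = u + (2 + v) := ⟨k - u - 2, by omega⟩
  set A := descProd s l u
  set C := descProd s (l + u + 2) v
  have hA : Commute (s (l + u + 1)) A :=
    commute_descProd s fun t _ ht => (hs.commute t _ (by omega) (by omega)).symm
  have hC : Commute (s (l + u)) C :=
    commute_descProd s fun t ht _ => hs.commute _ t (by omega) (by omega)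
  have hsplit : descProd s l (u + (2 + v)) = C * (s (l + u + 1) * s (l + u)) * A := by
    rw [descProd_add, descProd_add, descProd_two]
  refine ⟨s (l + u), gen _ (by omega), l, u + (2 + v), hlk, ?_⟩
  rw [hsplit]
  calc C * (s (l + u + 1) * s (l + u)) * A * s (l + u + 1)
      = C * (s (l + u + 1) * s (l + u) * s (l + u + 1)) * A := by
        simp only [mul_assoc, ← hA.eq]
    _ = C * (s (l + u) * s (l + u + 1) * s (l + u)) * A := by rw [hs.braid _ (by omega)]
    _ = s (l + u) * (C * (s (l + u + 1) * s (l + u)) * A) := by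
        simp only [mul_assoc, hC.left_comm]

theorem closure_image_Iio_succ_subset {m : ℕ} (hs : IsTypeAFamily s (m + 1)) :
    (closure (s '' Iio (m + 1)) : Set G) ⊆
      closure (s '' Iio m) * (fun p : ℕ × ℕ => descProd s p.1 p.2) '' {p | p.1 + p.2 = m + 1} := by
  set U := (closure (s '' Iio m) : Set G) *
    (fun p : ℕ × ℕ => descProd s p.1 p.2) '' {p | p.1 + p.2 = m + 1}
  have mul_gen : ∀ x ∈ U, ∀ j < m + 1, x * s j ∈ U := by
    rintro _ ⟨h, hh, _, ⟨⟨l, k⟩, hlk, rfl⟩, rfl⟩ j hj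
    obtain ⟨h', hh', l', k', hlk', he⟩ := hs.exists_descProd_mul_eq (Nat.lt_succ_iff.mp hj) hlk
    refine ⟨h * h', mul_mem hh hh', _, ⟨(l', k'), hlk', rfl⟩, ?_⟩
    rw [mul_assoc h, he]
    exact mul_assoc h h' _
  intro x hx
  induction hx using closure_induction_right with
  | one => exact ⟨1, one_mem _, 1, ⟨(m + 1, 0), by simp, rfl⟩, mul_one 1⟩
  | mul_right x _ y hy ih =>
    obtain ⟨j, hj, rfl⟩ := hy
    exact mul_gen x ih j hj
  | mul_inv_cancel x _ y hy ih =>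
    obtain ⟨j, hj, rfl⟩ := hy
    rw [inv_eq_of_mul_eq_one_right (hs.mul_self j hj)]
    exact mul_gen x ih j hj

theorem exists_finset_card_le {n : ℕ} (hs : IsTypeAFamily s n) :
    ∃ t : Finset G, t.card ≤ (n + 1).factorial ∧ (closure (s '' Iio n) : Set G) ⊆ t := by
  classical
  induction n with
  | zero => exact ⟨{1}, by simp, by simp⟩
  | succ m ih =>
    obtain ⟨t, ht, hsub⟩ := ih (hs.mono m.le_succ)
    set R := (Finset.HasAntidiagonal.antidiagonal (m + 1)).image fun p => descProd s p.1 p.2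
    refine ⟨t * R, ?_, ?_⟩
    · calc (t * R).card ≤ t.card * R.card := Finset.card_mul_le
        _ ≤ (m + 1).factorial * (m + 2) := by
            gcongr
            exact Finset.card_image_le.trans (by simp)
        _ = (m + 2).factorial := by rw [Nat.factorial_succ (m + 1)]; ring
    · refine hs.closure_image_Iio_succ_subset.trans ?_
      rw [Finset.coe_mul]
      refine Set.mul_subset_mul hsub ?_
      rintro _ ⟨p, hp, rfl⟩
      exact Finset.mem_image_of_mem _ (Finset.HasAntidiagonal.mem_antidiagonal.2 hp)

theorem finite_closure {n : ℕ} (hs : IsTypeAFamily s n) : Finite (closure (s '' Iio n)) := by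
  obtain ⟨t, -, hsub⟩ := hs.exists_finset_card_le
  exact (t.finite_toSet.subset hsub).to_subtype

theorem card_closure_le {n : ℕ} (hs : IsTypeAFamily s n) :
    Nat.card (closure (s '' Iio n)) ≤ (n + 1).factorial := by
  obtain ⟨t, ht, hsub⟩ := hs.exists_finset_card_le
  calc Nat.card (closure (s '' Iio n)) ≤ Nat.card (t : Set G) := Nat.card_mono t.finite_toSet hsub
    _ = t.card := Nat.card_coe_set_eq _ |>.trans (Set.ncard_coe_finset t)
    _ ≤ _ := ht

end IsTypeAFamily

end TypeARelations

theorem ZMod.natCast_ne_natCast {n a b : ℕ} (h : a ≠ b) (hab : a < b + (n + 1))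
    (hba : b < a + (n + 1)) : (a : ZMod (n + 1)) ≠ b := fun h' =>
  h (((ZMod.natCast_eq_natCast_iff a b (n + 1)).1 h').eq_of_abs_lt (by rw [abs_lt]; omega))

theorem List.formPerm_map_range_add {α : Type*} [AddCommMonoidWithOne α] [DecidableEq α] (c : α)
    (m : ℕ) : ((List.range (m + 1)).map fun k : ℕ => c + k).formPerm =
      ((List.range m).map fun k : ℕ => Equiv.swap (c + k) (c + k + 1)).prod := by
  induction m generalizing c with
  | zero => simp
  | succ m ih =>
    have hshift : ∀ k : ℕ, c + ((k + 1 : ℕ) : α) = c + 1 + k := fun k => by push_cast; abel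
    rw [List.range_succ_eq_map, List.range_succ_eq_map (n := m)]
    simp only [List.map_cons, List.map_map, Function.comp_def, Nat.succ_eq_add_one, hshift,
      Nat.cast_zero, add_zero, List.prod_cons, ← ih (c + 1)]
    rw [List.range_succ_eq_map]
    simp [Function.comp_def]

theorem ZMod.prod_map_range_swap_add {n : ℕ} (c : ZMod (n + 1)) :
    ((List.range n).map fun k : ℕ => Equiv.swap (c + k) (c + k + 1)).prod = Equiv.addRight 1 := by
  rw [← List.formPerm_map_range_add]
  set L := (List.range (n + 1)).map fun k : ℕ => c + k
  have hL : L.Nodup := by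
    refine List.nodup_range.map_on fun a ha b hb hab => ?_
    rw [List.mem_range] at ha hb
    by_contra hne
    exact ZMod.natCast_ne_natCast hne (by omega) (by omega) (add_left_cancel hab)
  ext x
  obtain ⟨v, hv, rfl⟩ : ∃ v < n + 1, c + v = x :=
    ⟨(x - c).val, ZMod.val_lt _, by rw [ZMod.natCast_zmod_val]; abel⟩
  have hx : c + (v : ZMod (n + 1)) = L[v]'(by simpa [L] using hv) := by simp [L]
  rw [hx, List.formPerm_apply_getElem L hL]
  simp [L, add_assoc]

theorem ZMod.closure_swap_natCast_succ (n : ℕ) :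
    Subgroup.closure ((fun k : ℕ => Equiv.swap ((k + 1 : ℕ) : ZMod (n + 1)) ((k + 1 : ℕ) + 1)) ''
      Set.Iio n) = ⊤ := by
  have hinj : Function.Injective fun i : Fin (n + 1) => ((i : ℕ) : ZMod (n + 1)) + 1 :=
    fun a b hab => Fin.ext <| by_contra fun hne =>
      ZMod.natCast_ne_natCast hne (by omega) (by omega) (add_right_cancel hab)
  set e := Equiv.ofBijective _ ((Fintype.bijective_iff_injective_and_card _).2 ⟨hinj, by simp⟩)
  have hFin :=
    Subgroup.closure_eq_top_of_mclosure_eq_top (Equiv.Perm.mclosure_swap_castSucc_succ n)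
  rw [eq_top_iff, ← Subgroup.map_top_of_surjective e.permCongrHom.toMonoidHom
    e.permCongrHom.surjective, ← hFin, MonoidHom.map_closure, Subgroup.closure_le]
  rintro _ ⟨_, ⟨i, rfl⟩, rfl⟩
  refine Subgroup.subset_closure ⟨i, i.isLt, ?_⟩
  simp [e, Equiv.permCongrHom, Equiv.permCongr_def, Equiv.symm_trans_swap_trans]

theorem QuotientGroup.surjective_mk'_comp_subtype {G : Type*} [Group G] {H N : Subgroup G}
    [N.Normal] (h : H ⊔ N = ⊤) : Function.Surjective ((QuotientGroup.mk' N).comp H.subtype) := by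
  rintro ⟨g⟩
  obtain ⟨x, hx, y, hy, rfl⟩ := Subgroup.mem_sup_of_normal_right.1 (h ▸ Subgroup.mem_top g)
  exact ⟨⟨x, hx⟩, (QuotientGroup.eq.2 (by simpa using hy)).symm⟩

theorem QuotientGroup.injective_mk'_comp_subtype {G M : Type*} [Group G] [Group M]
    {H N : Subgroup G} [N.Normal] {φ : G →* M} (hN : N ≤ φ.ker)
    (h : Function.Injective (φ.comp H.subtype)) :
    Function.Injective ((QuotientGroup.mk' N).comp H.subtype) :=
  Function.Injective.of_comp (f := QuotientGroup.lift N φ hN) h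

section AffineA

open Equiv

variable {n : ℕ}

theorem aa_mul_self (i : ZMod (n + 1)) : aa n i * aa n i = 1 :=
  (affineA n).toCoxeterSystem.simple_mul_simple_self i

theorem aa_braid (hn : n ≠ 0) (i : ZMod (n + 1)) :
    aa n i * aa n (i + 1) * aa n i = aa n (i + 1) * aa n i * aa n (i + 1) := by
  have hM : (affineA n).M i (i + 1) = 3 := by
    have : i ≠ i + 1 := by
      simpa using ZMod.natCast_ne_natCast (n := n) (a := 1) (b := 0) one_ne_zero
        (by omega) (by omega)
    simp [affineA, this]
  have := (affineA n).toCoxeterSystem.wordProd_braidWord_eq i (i + 1)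
  rw [CoxeterSystem.braidWord, CoxeterSystem.braidWord, (affineA n).symmetric _ i, hM] at this
  simpa [CoxeterSystem.alternatingWord, CoxeterSystem.wordProd, aa, mul_assoc] using this.symm

theorem aa_commute {i j : ZMod (n + 1)} (hij : i ≠ j) (hi : i ≠ j + 1) (hj : j ≠ i + 1) :
    Commute (aa n i) (aa n j) := by
  have hM : (affineA n).M i j = 2 := by simp [affineA, hij, hi, hj]
  have := (affineA n).toCoxeterSystem.wordProd_braidWord_eq i j
  rw [CoxeterSystem.braidWord, CoxeterSystem.braidWord, (affineA n).symmetric _ i, hM] at this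
  simp [CoxeterSystem.alternatingWord, CoxeterSystem.wordProd] at this
  exact this

theorem isLiftable_swap_add_one (hn : 2 ≤ n) :
    (affineA n).IsLiftable fun i : ZMod (n + 1) => swap i (i + 1) := by
  have h1 : ∀ i : ZMod (n + 1), i ≠ i + 1 := fun i => by
    simpa using ZMod.natCast_ne_natCast (n := n) (a := 1) (b := 0) one_ne_zero
      (by omega) (by omega)
  have h2 : ∀ i : ZMod (n + 1), i ≠ i + 1 + 1 := fun i => by
    simpa [add_assoc, one_add_one_eq_two] using
      ZMod.natCast_ne_natCast (n := n) (a := 2) (b := 0) (by omega) (by omega) (by omega)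
  have cube : ∀ i : ZMod (n + 1), (swap i (i + 1) * swap (i + 1) (i + 1 + 1)) ^ 3 = 1 :=
    fun i => by
      rw [swap_comm i]
      exact (Perm.isThreeCycle_swap_mul_swap_same (h1 i).symm (h1 (i + 1)) (h2 i)).orderOf ▸
        pow_orderOf_eq_one _
  intro i j
  by_cases hij : i = j
  · simp [affineA, hij]
  by_cases hadj : i = j + 1 ∨ j = i + 1
  · simp only [affineA, if_neg hij, if_pos hadj]
    rcases hadj with rfl | rfl
    · have hinv : swap (j + 1) (j + 1 + 1) * swap j (j + 1) =
          (swap j (j + 1) * swap (j + 1) (j + 1 + 1))⁻¹ := by simp [mul_inv_rev]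
      rw [hinv, inv_pow, cube, inv_one]
    · exact cube i
  · simp only [affineA, if_neg hij, if_neg hadj]
    obtain ⟨hi, hj⟩ := not_or.1 hadj
    have : Commute (swap i (i + 1)) (swap j (j + 1)) :=
      (Perm.disjoint_swap_swap (by simp [hij, hi, Ne.symm hj, h1])).commute
    rw [this.mul_pow, sq, sq, swap_mul_self, swap_mul_self, one_mul]

variable (hn : 2 ≤ n)

noncomputable def affineAToPerm : (affineA n).Group →* Perm (ZMod (n + 1)) :=
  (affineA n).toCoxeterSystem.lift ⟨_, isLiftable_swap_add_one hn⟩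

theorem affineAToPerm_aa (i : ZMod (n + 1)) :
    affineAToPerm hn (aa n i) = swap i (i + 1) :=
  (affineA n).toCoxeterSystem.lift_apply_simple (isLiftable_swap_add_one hn) i

theorem affineAToPerm_pp (j : ZMod (n + 1)) : affineAToPerm hn (pp n j) = Equiv.addRight 1 := by
  rw [pp, map_list_prod, List.map_map, ← ZMod.prod_map_range_swap_add (j + 1)]
  simp only [Function.comp_def, affineAToPerm_aa]

theorem NN_le_ker_affineAToPerm : NN n ≤ (affineAToPerm hn).ker := by
  rw [NN, Subgroup.closure_le]
  rintro _ ⟨i, j, rfl⟩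
  rw [SetLike.mem_coe, MonoidHom.mem_ker, map_mul, map_inv, affineAToPerm_pp, affineAToPerm_pp,
    inv_mul_cancel]

end AffineA

section Parabolic

open Subgroup Set

variable {n : ℕ}

theorem aa_natCast_mem_parab {m : ℕ} (h1 : 1 ≤ m) (h2 : m ≤ n) : aa n m ∈ parab n := by
  refine subset_closure ⟨m, ?_, rfl⟩
  simpa using ZMod.natCast_ne_natCast (n := n) (b := 0) (by omega) (by omega) (by omega)

theorem parab_eq_closure :
    parab n = closure ((fun k : ℕ => aa n ((k + 1 : ℕ) : ZMod (n + 1))) '' Iio n) := by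
  refine le_antisymm ((closure_le _).2 ?_) ((closure_le _).2 ?_)
  · rintro _ ⟨i, hi, rfl⟩
    have h0 : i.val ≠ 0 := (ZMod.val_ne_zero i).2 hi
    have hlt := ZMod.val_lt i
    refine subset_closure ⟨i.val - 1, by rw [mem_Iio]; omega, ?_⟩
    simp only [Nat.sub_add_cancel (Nat.one_le_iff_ne_zero.2 h0), ZMod.natCast_zmod_val]
  · rintro _ ⟨k, hk, rfl⟩
    exact aa_natCast_mem_parab (by omega) hk

theorem isTypeAFamily_aa :
    IsTypeAFamily (fun k : ℕ => aa n ((k + 1 : ℕ) : ZMod (n + 1))) n where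
  mul_self i _ := aa_mul_self _
  braid i hi := by
    simpa only [Nat.cast_succ] using aa_braid (by omega) ((i + 1 : ℕ) : ZMod (n + 1))
  commute i j hij hj := by
    refine aa_commute (ZMod.natCast_ne_natCast (by omega) (by omega) (by omega)) ?_ ?_ <;>
      rw [← Nat.cast_succ] <;> exact ZMod.natCast_ne_natCast (by omega) (by omega) (by omega)

theorem pp_zero_mem_parab : pp n 0 ∈ parab n :=
  list_prod_mem fun _ hx => by
    obtain ⟨k, hk, rfl⟩ := List.mem_map.1 hx
    rw [List.mem_range] at hk
    simpa [add_comm] using aa_natCast_mem_parab (n := n) (m := k + 1) (by omega) hk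

theorem aa_zero_mem_parab_sup_NN (hn : n ≠ 0) : aa n 0 ∈ parab n ⊔ NN n := by
  set w := ((List.range (n - 1)).map fun k : ℕ => aa n (1 + 1 + k)).prod
  have hw : w ∈ parab n := list_prod_mem fun _ hx => by
    obtain ⟨k, hk, rfl⟩ := List.mem_map.1 hx
    rw [List.mem_range] at hk
    simpa [add_comm, one_add_one_eq_two] using
      aa_natCast_mem_parab (n := n) (m := k + 2) (by omega) (by omega)
  have hp : pp n 1 = w * aa n 0 := by
    obtain ⟨m, rfl⟩ : ∃ m, n = m + 1 := ⟨n - 1, by omega⟩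
    have hwrap : 1 + 1 + (m : ZMod (m + 1 + 1)) = 0 := by
      have := ZMod.natCast_self (m + 1 + 1)
      push_cast at this
      linear_combination this
    rw [pp, List.range_succ, List.map_append, List.prod_append, List.map_singleton,
      List.prod_singleton, hwrap]
    rfl
  have : aa n 0 = w⁻¹ * pp n 0 * ((pp n 0)⁻¹ * pp n 1) := by rw [hp]; group
  rw [this]
  exact mul_mem (mem_sup_left (mul_mem (inv_mem hw) pp_zero_mem_parab))
    (mem_sup_right (subset_closure ⟨1, 0, rfl⟩))

theorem parab_sup_NN (hn : n ≠ 0) : parab n ⊔ NN n = ⊤ := by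
  rw [eq_top_iff, ← (affineA n).toCoxeterSystem.subgroup_closure_range_simple, closure_le]
  rintro _ ⟨i, rfl⟩
  by_cases hi : i = 0
  · subst hi
    exact aa_zero_mem_parab_sup_NN hn
  · exact mem_sup_left (subset_closure ⟨i, hi, rfl⟩)

theorem bijective_affineAToPerm_comp_subtype (hn : 2 ≤ n) :
    Function.Bijective ((affineAToPerm hn).comp (parab n).subtype) := by
  have : Finite (parab n) := parab_eq_closure (n := n) ▸ isTypeAFamily_aa.finite_closure
  have hsurj : Function.Surjective ((affineAToPerm hn).comp (parab n).subtype) := by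
    rw [← MonoidHom.range_eq_top, MonoidHom.range_comp, range_subtype, parab_eq_closure,
      MonoidHom.map_closure, ← ZMod.closure_swap_natCast_succ n, image_image]
    simp only [affineAToPerm_aa]
  refine hsurj.bijective_of_nat_card_le ?_
  rw [Nat.card_perm, Nat.card_zmod, parab_eq_closure]
  exact isTypeAFamily_aa.card_closure_le

end Parabolic

/-- In `Ãₙ`, the natural map from the parabolic subgroup `⟨a₁,…,aₙ⟩` to the quotient `Ãₙ/N`
is an isomorphism; consequently `Ãₙ/N ≅ Aₙ ≅ S_{n+1}`. -/
theorem stmt14 (n : ℕ) (hn : 2 ≤ n) (hN : (NN n).Normal) :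
    Function.Bijective ((QuotientGroup.mk' (NN n)).comp (parab n).subtype) ∧
    Nonempty (((affineA n).Group ⧸ NN n) ≃* Equiv.Perm (Fin (n + 1))) := by
  have hψ := bijective_affineAToPerm_comp_subtype hn
  have hf : Function.Bijective ((QuotientGroup.mk' (NN n)).comp (parab n).subtype) :=
    ⟨QuotientGroup.injective_mk'_comp_subtype (NN_le_ker_affineAToPerm hn) hψ.1,
      QuotientGroup.surjective_mk'_comp_subtype (parab_sup_NN (by omega))⟩
  exact ⟨hf, ⟨((MulEquiv.ofBijective _ hf).symm.trans (MulEquiv.ofBijective _ hψ)).trans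
    (ZMod.finEquiv (n + 1)).toEquiv.symm.permCongrHom⟩⟩
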